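/- arXiv:2406.06933 — 8 statements merged into one kernel-verified Lean document; each statement's English description precedes it below -/
import Mathlib

section
/- Let R be an additively idempotent semiring and let I = {x ∈ R : x^n = 0 for some n} be the nilradical of R. If a + b ∈ I then a ∈ I (and b ∈ I); that is, the nilradical is a subtractive ideal. -/
/-- In an additively idempotent commutative semiring, the nilradical
(the set of nilpotent elements) is a subtractive ideal: if `a + b` is nilpotent then
both `a` and `b` are nilpotent. -/
theorem nilradical_subtractive {R : Type*} [CommSemiring R]
    (hidem : ∀ a : R, a + a = a) (a b : R) (h : IsNilpotent (a + b)) :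
    IsNilpotent a ∧ IsNilpotent b := by
  obtain ⟨n, hn⟩ := h
  have key : ∀ (x y : R) (m : ℕ), x ^ m + (x + y) ^ m = (x + y) ^ m := by
    intro x y m
    induction m with
    | zero => simpa using hidem 1
    | succ k ih =>
      have h1 : (x + y) ^ (k + 1) = x ^ (k + 1) + (y * x ^ k + (x + y) ^ (k + 1)) := by
        calc (x + y) ^ (k + 1) = (x + y) * (x ^ k + (x + y) ^ k) := by rw [ih, pow_succ']
          _ = x ^ (k + 1) + (y * x ^ k + (x + y) ^ (k + 1)) := by ring
      conv_lhs => rw [h1, ← add_assoc, hidem]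
      exact h1.symm
  constructor
  · exact ⟨n, by rw [← add_zero (a ^ n), ← hn, key a b n, hn]⟩
  · refine ⟨n, ?_⟩
    rw [add_comm] at hn
    rw [← add_zero (b ^ n), ← hn, key b a n, hn]
end

section
/- Let R be an additively idempotent irreducible semiring. Then the map ψ : R → 𝔹 into the Boolean semifield, sending x to 0 if x is nilpotent and to 1 otherwise, is a semiring homomorphism. -/
open Classical in
/-- The map to the Boolean semifield `𝔹 = {0,1}` (modeled by `Bool` with `||` as addition
and `&&` as multiplication), sending `x` to `0` (`false`) if `x` is nilpotent and to `1`
(`true`) otherwise. -/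
noncomputable def nilIndicator {R : Type*} [CommSemiring R] (x : R) : Bool :=
  if IsNilpotent x then false else true

private lemma nilInd_le_pow {R : Type*} [CommSemiring R]
    (hidem : ∀ a : R, a + a = a) (x z : R) (h : x + z = z) (n : ℕ) :
    x ^ n + z ^ n = z ^ n := by
  induction n with
  | zero => simpa using hidem 1
  | succ n ih =>
    have h1 : x ^ (n+1) + z * x ^ n = z * x ^ n := by
      rw [pow_succ, mul_comm z (x ^ n), ← mul_add, h]
    have h2 : z * x ^ n + z ^ (n+1) = z ^ (n+1) := by
      rw [pow_succ, mul_comm (z ^ n) z, ← mul_add, ih]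
    calc x ^ (n+1) + z ^ (n+1) = x ^ (n+1) + (z * x ^ n + z ^ (n+1)) := by rw [h2]
      _ = (x ^ (n+1) + z * x ^ n) + z ^ (n+1) := by ring
      _ = z * x ^ n + z ^ (n+1) := by rw [h1]
      _ = z ^ (n+1) := h2

private lemma nilInd_add_nil {R : Type*} [CommSemiring R]
    (hidem : ∀ a : R, a + a = a) {x y : R} (h : IsNilpotent (x + y)) :
    IsNilpotent x := by
  obtain ⟨n, hn⟩ := h
  refine ⟨n, ?_⟩
  have hx : x + (x + y) = x + y := by rw [← add_assoc, hidem]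
  have := nilInd_le_pow hidem x (x + y) hx n
  rw [hn, add_zero] at this
  exact this

/-- For an additively idempotent, irreducible, (nontrivial) commutative
semiring `R`, the map `ψ : R → 𝔹` sending nilpotents to `0` and non-nilpotents to `1`
is a semiring homomorphism into the Boolean semifield (`Bool` with `or` as addition and
`and` as multiplication). -/
theorem nilIndicator_is_hom {R : Type*} [CommSemiring R] [Nontrivial R]
    (hidem : ∀ a : R, a + a = a)
    (hirr : ∀ x y : R, IsNilpotent (x * y) → IsNilpotent x ∨ IsNilpotent y) :
    nilIndicator (0 : R) = false ∧
    nilIndicator (1 : R) = true ∧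
    (∀ x y : R, nilIndicator (x + y) = (nilIndicator x || nilIndicator y)) ∧
    (∀ x y : R, nilIndicator (x * y) = (nilIndicator x && nilIndicator y)) := by
  refine ⟨?_, ?_, ?_, ?_⟩
  · simp [nilIndicator]
  · have : ¬ IsNilpotent (1 : R) := fun ⟨n, hn⟩ => (one_ne_zero : (1:R) ≠ 0) (by simpa using hn)
    simp [nilIndicator, this]
  · intro x y
    unfold nilIndicator
    by_cases hxy : IsNilpotent (x + y)
    · have hx := nilInd_add_nil hidem hxy
      have hy := nilInd_add_nil hidem (by rwa [add_comm] at hxy)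
      simp [hxy, hx, hy]
    · by_cases hx : IsNilpotent x
      · by_cases hy : IsNilpotent y
        · exact absurd (Commute.isNilpotent_add (Commute.all x y) hx hy) hxy
        · simp [hxy, hx, hy]
      · simp [hxy, hx]
  · intro x y
    unfold nilIndicator
    by_cases hxy : IsNilpotent (x * y)
    · rcases hirr x y hxy with hx | hy
      · simp [hxy, hx]
      · simp [hxy, hy]
    · have hx : ¬ IsNilpotent x := fun ⟨n, hn⟩ => hxy ⟨n, by rw [mul_pow, hn, zero_mul]⟩
      have hy : ¬ IsNilpotent y := fun ⟨n, hn⟩ => hxy ⟨n, by rw [mul_pow, hn, mul_zero]⟩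
      simp [hxy, hx, hy]
end

section
/- Let R be a zero-sum-free semiring (a + b = 0 implies a = b = 0) with no nontrivial zero-divisors and no nontrivial nilpotents. Then for any commutative monoid M (written multiplicatively), the monoid semiring R[M] has no nontrivial zero-divisors. -/
/-!
If `x m ≠ 0` and `y n ≠ 0`, the coefficient of `m * n` in `x * y` is a sum of products
`x a * y b` over `a * b = m * n`, one of which is `x m * y n`. In a zero-sum-free semiring a
vanishing sum has vanishing summands, so `x m * y n = 0`, which no zero-divisor in `R` allows.
-/

theorem Finset.eq_zero_of_sum_eq_zero_of_zeroSumFree {ι R : Type*} [AddCommMonoid R]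
    (hzsf : ∀ a b : R, a + b = 0 → a = 0 ∧ b = 0) [DecidableEq ι] {s : Finset ι} {f : ι → R}
    (hs : ∑ j ∈ s, f j = 0) {i : ι} (hi : i ∈ s) : f i = 0 :=
  (hzsf _ _ ((s.add_sum_erase f hi).trans hs)).1

namespace MonoidAlgebra

theorem coeff_mul_coeff_eq_zero_of_zeroSumFree {R M : Type*} [Semiring R] [Mul M]
    (hzsf : ∀ a b : R, a + b = 0 → a = 0 ∧ b = 0) {x y : MonoidAlgebra R M} {m n : M}
    (h : (x * y).coeff (m * n) = 0) : x.coeff m * y.coeff n = 0 := by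
  classical
  by_cases hm : x.coeff m = 0
  · simp [hm]
  by_cases hn : y.coeff n = 0
  · simp [hn]
  rw [coeff_mul, Finsupp.sum] at h
  have hrow := Finset.eq_zero_of_sum_eq_zero_of_zeroSumFree hzsf h
    (Finsupp.mem_support_iff.mpr hm)
  rw [Finsupp.sum] at hrow
  simpa using Finset.eq_zero_of_sum_eq_zero_of_zeroSumFree hzsf hrow
    (Finsupp.mem_support_iff.mpr hn)

end MonoidAlgebra

theorem monoidAlgebra_no_zero_divisors_general {R M : Type*} [CommSemiring R] [CommMonoid M]
    (hzsf : ∀ a b : R, a + b = 0 → a = 0 ∧ b = 0)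
    (hzd : ∀ a b : R, a * b = 0 → a = 0 ∨ b = 0)
    (x y : MonoidAlgebra R M) (h : x * y = 0) :
    x = 0 ∨ y = 0 := by
  by_contra! ⟨hx, hy⟩
  obtain ⟨m, hm⟩ := Finsupp.ne_iff.mp (mt MonoidAlgebra.coeff_eq_zero.mp hx)
  obtain ⟨n, hn⟩ := Finsupp.ne_iff.mp (mt MonoidAlgebra.coeff_eq_zero.mp hy)
  have hmn : x.coeff m * y.coeff n = 0 :=
    MonoidAlgebra.coeff_mul_coeff_eq_zero_of_zeroSumFree hzsf (by simp [h])
  exact (hzd _ _ hmn).elim hm hn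

/-- Let `R` be a zero-sum-free commutative semiring with no nontrivial
zero-divisors and no nontrivial nilpotents.  Then for any commutative monoid `M`, the
monoid semiring `R[M]` has no nontrivial zero-divisors. -/
theorem monoidAlgebra_no_zero_divisors {R M : Type*} [CommSemiring R] [CommMonoid M]
    (hzsf : ∀ a b : R, a + b = 0 → a = 0 ∧ b = 0)
    (hzd : ∀ a b : R, a * b = 0 → a = 0 ∨ b = 0)
    (hnil : ∀ a : R, IsNilpotent a → a = 0)
    (x y : MonoidAlgebra R M) (h : x * y = 0) :
    x = 0 ∨ y = 0 :=
  monoidAlgebra_no_zero_divisors_general hzsf hzd x y h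
end

section
/- Let A be an additively idempotent irreducible semiring and M a commutative monoid. Then the monoid semiring A[M] is irreducible: if the product of two elements of A[M] is nilpotent, then one of them is nilpotent. -/
/-!
Write `a ≤ b` for `a + b = b`: with idempotent addition this is a partial order compatible with
multiplication, and anything below a nilpotent element is nilpotent. Since `x m * y m'` lies below
the coefficient of `x * y` at `m * m'`, and `(x m) ^ n` below that of `x ^ n` at `m ^ n`, an
element of `A[M]` is nilpotent exactly when all its coefficients are. If `x * y` is nilpotent and
some `x m` is not, irreducibility of `A` applied to the nilpotent products `x m * y m'` makes every
coefficient of `y` nilpotent.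
-/

section IdempotentAddition

variable {A : Type*} [Semiring A]

theorem add_mul_add_eq_of_add_eq {a b c d : A} (hab : a + b = b) (hcd : c + d = d) :
    a * c + b * d = b * d := by
  calc a * c + b * d = (a + b) * c + b * d := by rw [add_mul, add_assoc, ← mul_add, hcd]
    _ = b * d := by rw [hab, ← mul_add, hcd]

theorem pow_add_pow_eq_of_add_eq (hidem : ∀ a : A, a + a = a) {a b : A} (hab : a + b = b) :
    ∀ n : ℕ, a ^ n + b ^ n = b ^ n
  | 0 => by rw [pow_zero, pow_zero, hidem]
  | n + 1 => by
    rw [pow_succ, pow_succ]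
    exact add_mul_add_eq_of_add_eq (pow_add_pow_eq_of_add_eq hidem hab n) hab

theorem IsNilpotent.of_add_eq (hidem : ∀ a : A, a + a = a) {a b : A} (hab : a + b = b)
    (hb : IsNilpotent b) : IsNilpotent a := by
  obtain ⟨n, hn⟩ := hb
  refine ⟨n, ?_⟩
  simpa [hn] using pow_add_pow_eq_of_add_eq hidem hab n

namespace MonoidAlgebra

variable {M : Type*} [Monoid M]

theorem coeff_mul_coeff_add_coeff_mul (hidem : ∀ a : A, a + a = a) (x y : MonoidAlgebra A M)
    (m m' : M) :
    x.coeff m * y.coeff m' + (x * y).coeff (m * m') = (x * y).coeff (m * m') := by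
  obtain ⟨r, hr⟩ : ∃ r, x * y = single (m * m') (x.coeff m * y.coeff m') + r := by
    refine ⟨single m (x.coeff m) * y.erase m' + x.erase m * y, ?_⟩
    conv_lhs => rw [← single_add_erase m x, ← single_add_erase m' y]
    rw [add_mul, mul_add, single_mul_single, add_assoc, single_add_erase]
  rw [hr, coeff_add, Finsupp.add_apply, coeff_single, Finsupp.single_eq_same, ← add_assoc,
    hidem]

theorem coeff_pow_add_coeff_pow (hidem : ∀ a : A, a + a = a) (x : MonoidAlgebra A M) (m : M) :
    ∀ n : ℕ, x.coeff m ^ n + (x ^ n).coeff (m ^ n) = (x ^ n).coeff (m ^ n)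
  | 0 => by rw [pow_zero, pow_zero, pow_zero, coeff_one_one, hidem]
  | n + 1 => by
    rw [pow_succ, pow_succ, pow_succ]
    have hc := coeff_mul_coeff_add_coeff_mul hidem (x ^ n) x (m ^ n) m
    calc _ = (x.coeff m ^ n + (x ^ n).coeff (m ^ n)) * x.coeff m
          + (x ^ n * x).coeff (m ^ n * m) := by rw [add_mul, add_assoc, hc]
      _ = _ := by rw [coeff_pow_add_coeff_pow hidem x m n, hc]

theorem isNilpotent_coeff (hidem : ∀ a : A, a + a = a) {x : MonoidAlgebra A M}
    (hx : IsNilpotent x) (m : M) : IsNilpotent (x.coeff m) := by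
  obtain ⟨n, hn⟩ := hx
  refine ⟨n, ?_⟩
  simpa [hn] using coeff_pow_add_coeff_pow hidem x m n

end MonoidAlgebra

end IdempotentAddition

theorem MonoidAlgebra.isNilpotent_of_forall_isNilpotent_coeff {A M : Type*} [CommSemiring A]
    [CommMonoid M] {x : MonoidAlgebra A M} (hx : ∀ m, IsNilpotent (x.coeff m)) :
    IsNilpotent x := by
  rw [← sum_coeff_single x]
  refine isNilpotent_sum fun m _ => ?_
  obtain ⟨n, hn⟩ := hx m
  exact ⟨n, by rw [single_pow, hn, single_zero]⟩

theorem MonoidAlgebra.isNilpotent_iff_forall_isNilpotent_coeff {A M : Type*} [CommSemiring A]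
    [CommMonoid M] (hidem : ∀ a : A, a + a = a) {x : MonoidAlgebra A M} :
    IsNilpotent x ↔ ∀ m, IsNilpotent (x.coeff m) :=
  ⟨fun hx => isNilpotent_coeff hidem hx, isNilpotent_of_forall_isNilpotent_coeff⟩

/-- Let `A` be an additively idempotent irreducible commutative semiring
and `M` a commutative monoid.  Then the monoid semiring `A[M]` is irreducible: if the
product of two elements of `A[M]` is nilpotent, then one of them is nilpotent. -/
theorem monoidAlgebra_irreducible {A M : Type*} [CommSemiring A] [CommMonoid M]
    (hidem : ∀ a : A, a + a = a)
    (hirr : ∀ x y : A, IsNilpotent (x * y) → IsNilpotent x ∨ IsNilpotent y)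
    (x y : MonoidAlgebra A M) (h : IsNilpotent (x * y)) :
    IsNilpotent x ∨ IsNilpotent y := by
  simp only [MonoidAlgebra.isNilpotent_iff_forall_isNilpotent_coeff hidem] at h ⊢
  refine or_iff_not_imp_left.2 fun hx m' => ?_
  obtain ⟨m, hm⟩ := not_forall.1 hx
  have hprod : IsNilpotent (x.coeff m * y.coeff m') :=
    (h (m * m')).of_add_eq hidem (MonoidAlgebra.coeff_mul_coeff_add_coeff_mul hidem x y m m')
  exact (hirr _ _ hprod).resolve_left hm
end

section
/- Let A be an additively idempotent irreducible semiring and let ∼ be a semiring congruence on A generated by a set of pairs (x_i, y_i) such that for each i, x_i is nilpotent if and only if y_i is nilpotent. Then whenever x ∼ y, x is nilpotent if and only if y is nilpotent; moreover the quotient semiring A/∼ is irreducible. -/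
section Aux

variable {A : Type*} [CommSemiring A]

lemma aux_eq_zero_of_add (hidem : ∀ a : A, a + a = a) {a b : A} (h : a + b = 0) : a = 0 := by
  have : a + (a + b) = a + b := by rw [← add_assoc, hidem]
  rw [h, add_zero] at this
  exact this

lemma aux_nil_add (hidem : ∀ a : A, a + a = a) {x y : A} :
    IsNilpotent (x + y) ↔ IsNilpotent x ∧ IsNilpotent y := by
  constructor
  · rintro ⟨n, hn⟩
    rw [add_pow] at hn
    constructor
    · refine ⟨n, ?_⟩
      rw [Finset.sum_range_succ_comm] at hn
      have := aux_eq_zero_of_add hidem hn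
      simpa using this
    · refine ⟨n, ?_⟩
      rw [Finset.sum_range_succ'] at hn
      rw [add_comm] at hn
      have := aux_eq_zero_of_add hidem hn
      simpa using this
  · rintro ⟨⟨n, hn⟩, ⟨m, hm⟩⟩
    refine ⟨n + m, ?_⟩
    rw [add_pow]
    apply Finset.sum_eq_zero
    intro k hk
    simp only [Finset.mem_range, Nat.lt_succ_iff] at hk
    rcases le_or_gt n k with h | h
    · have : x ^ k = 0 := by
        rw [← Nat.sub_add_cancel h, pow_add, hn, mul_zero]
      rw [this, zero_mul, zero_mul]
    · have : y ^ (n + m - k) = 0 := by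
        have hmle : m ≤ n + m - k := by omega
        rw [← Nat.sub_add_cancel hmle, pow_add, hm, mul_zero]
      rw [this, mul_zero, zero_mul]

lemma aux_nil_mul (hirr : ∀ x y : A, IsNilpotent (x * y) → IsNilpotent x ∨ IsNilpotent y)
    {x y : A} : IsNilpotent (x * y) ↔ IsNilpotent x ∨ IsNilpotent y := by
  constructor
  · exact hirr x y
  · rintro (⟨n, hn⟩ | ⟨n, hn⟩)
    · exact ⟨n, by rw [mul_pow, hn, zero_mul]⟩
    · exact ⟨n, by rw [mul_pow, hn, mul_zero]⟩

end Aux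

/-- Let `A` be an additively idempotent irreducible commutative semiring
and let `∼` be the semiring congruence generated by a set of pairs `r` such that related
pairs are simultaneously nilpotent or non-nilpotent.  Then any two `∼`-related elements
are simultaneously nilpotent or non-nilpotent, and the quotient semiring `A/∼` is
irreducible. -/
theorem quotient_irreducible {A : Type*} [CommSemiring A]
    (hidem : ∀ a : A, a + a = a)
    (hirr : ∀ x y : A, IsNilpotent (x * y) → IsNilpotent x ∨ IsNilpotent y)
    (r : A → A → Prop) (hr : ∀ x y, r x y → (IsNilpotent x ↔ IsNilpotent y)) :
    (∀ x y : A, ringConGen r x y → (IsNilpotent x ↔ IsNilpotent y)) ∧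
    (∀ x y : (ringConGen r).Quotient,
      IsNilpotent (x * y) → IsNilpotent x ∨ IsNilpotent y) := by
  have part1 : ∀ x y : A, ringConGen r x y → (IsNilpotent x ↔ IsNilpotent y) := by
    intro x y h
    have h' : RingConGen.Rel r x y := h
    clear h
    induction h' with
    | of a b hab => exact hr a b hab
    | refl a => exact Iff.rfl
    | symm _ ih => exact ih.symm
    | trans _ _ ih1 ih2 => exact ih1.trans ih2
    | add _ _ ih1 ih2 =>
        rw [aux_nil_add hidem, aux_nil_add hidem]
        exact and_congr ih1 ih2
    | mul _ _ ih1 ih2 =>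
        rw [aux_nil_mul hirr, aux_nil_mul hirr]
        exact or_congr ih1 ih2
  refine ⟨part1, ?_⟩
  have key : ∀ a : A, IsNilpotent (a : (ringConGen r).Quotient) ↔ IsNilpotent a := by
    intro a
    constructor
    · rintro ⟨n, hn⟩
      rw [← RingCon.coe_pow] at hn
      have h0 : ((0 : A) : (ringConGen r).Quotient) = 0 := rfl
      rw [← h0, RingCon.eq] at hn
      have : IsNilpotent (a ^ n) := by
        rw [part1 _ _ hn]
        exact ⟨1, by simp⟩
      obtain ⟨m, hm⟩ := this
      rw [← pow_mul] at hm
      exact ⟨n * m + 1, by rw [pow_succ, hm, zero_mul]⟩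
    · rintro ⟨n, hn⟩
      exact ⟨n, by rw [← RingCon.coe_pow, hn]; rfl⟩
  intro x y
  induction x using Quotient.inductionOn with
  | h a =>
    induction y using Quotient.inductionOn with
    | h b =>
      intro hxy
      have : IsNilpotent ((a * b : A) : (ringConGen r).Quotient) := hxy
      rw [key, aux_nil_mul hirr] at this
      rcases this with h | h
      · exact Or.inl ((key a).mpr h)
      · exact Or.inr ((key b).mpr h)
end

section
/- Let R be a zero-sum-free semiring with only trivial idempotent pairs, and let M be a free R-module with basis S. Suppose M = P ⊕ Q as R-modules. Then there exists a subset S' ⊆ S such that P is free with basis S' and Q is free with basis S \ S'. -/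
/-!
Write a basis vector as `b i = p + q` with `p ∈ P`, `q ∈ Q`. Zero-sum-freeness forces
`p = e • b i` and `q = f • b i` with `e + f = 1`, and uniqueness of the decomposition of
`e • b i = p` forces `e • q = 0`, i.e. `e * f = 0`. As the idempotent pair `(e, f)` is trivial,
every basis vector lies in `P` or in `Q`. With `s = {i | b i ∈ P}`, the spans of `b '' s` and
`b '' sᶜ` lie in `P` and `Q` and together span `M`, so uniqueness again makes them equal to
`P` and `Q`.
-/

open Submodule

section

variable {R M ι : Type*} [Semiring R] [AddCommMonoid M] [Module R M]

theorem Submodule.eq_of_injective_coprod_of_sup_eq_top {P Q P' Q' : Submodule R M}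
    (hinj : Function.Injective (P.subtype.coprod Q.subtype))
    (hP : P' ≤ P) (hQ : Q' ≤ Q) (hsup : P' ⊔ Q' = ⊤) : P' = P ∧ Q' = Q := by
  have hsplit : ∀ m, ∃ y ∈ P', ∃ z ∈ Q', y + z = m := fun m => mem_sup.1 (hsup ▸ mem_top)
  refine ⟨le_antisymm hP fun p hp => ?_, le_antisymm hQ fun q hq => ?_⟩
  · obtain ⟨y, hy, z, hz, hyz⟩ := hsplit p
    have := hinj (a₁ := (⟨y, hP hy⟩, ⟨z, hQ hz⟩)) (a₂ := (⟨p, hp⟩, 0)) (by simpa using hyz)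
    exact (congr_arg (fun x => (x.1 : M)) this : y = p) ▸ hy
  · obtain ⟨y, hy, z, hz, hyz⟩ := hsplit q
    have := hinj (a₁ := (⟨y, hP hy⟩, ⟨z, hQ hz⟩)) (a₂ := (0, ⟨q, hq⟩)) (by simpa using hyz)
    exact (congr_arg (fun x => (x.2 : M)) this : z = q) ▸ hz

namespace Module.Basis

theorem eq_repr_smul_of_add_eq (hzsf : ∀ a b : R, a + b = 0 → a = 0 ∧ b = 0)
    (b : Basis ι R M) {i : ι} {x y : M} (h : x + y = b i) : x = b.repr x i • b i := by
  classical
  apply b.repr.injective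
  ext j
  by_cases hji : j = i
  · simp [hji]
  · have hsum : b.repr x j + b.repr y j = 0 := by
      simpa [Finsupp.single_apply, Ne.symm hji] using congr(b.repr $h j)
    simp [(hzsf _ _ hsum).1, Ne.symm hji]

theorem mem_or_mem_of_injective_coprod (hzsf : ∀ a b : R, a + b = 0 → a = 0 ∧ b = 0)
    (htriv : ∀ e f : R, e + f = 1 → e * f = 0 → (e = 0 ∧ f = 1) ∨ (e = 1 ∧ f = 0))
    (b : Basis ι R M) {P Q : Submodule R M}
    (hinj : Function.Injective (P.subtype.coprod Q.subtype)) {i : ι} (hi : b i ∈ P ⊔ Q) :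
    b i ∈ P ∨ b i ∈ Q := by
  obtain ⟨p, hp, q, hq, hpq⟩ := mem_sup.1 hi
  set e := b.repr p i
  set f := b.repr q i
  have hp' : p = e • b i := b.eq_repr_smul_of_add_eq hzsf hpq
  have hq' : q = f • b i := b.eq_repr_smul_of_add_eq hzsf ((add_comm q p).trans hpq)
  have hef : e + f = 1 := by simpa using congr(b.repr $hpq i)
  have heq : e • q = 0 := by
    have hsplit : e • p + e • q = p + 0 := by rw [← smul_add, hpq, add_zero, hp']
    have := hinj (a₁ := (⟨e • p, P.smul_mem e hp⟩, ⟨e • q, Q.smul_mem e hq⟩))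
      (a₂ := (⟨p, hp⟩, 0)) (by simpa using hsplit)
    simpa using congr_arg (fun x => (x.2 : M)) this
  have hmul : e * f = 0 := by
    rw [hq', smul_smul] at heq
    simpa using congr(b.repr $heq i)
  rcases htriv e f hef hmul with ⟨-, hf⟩ | ⟨he, -⟩
  · exact .inr (by rwa [hq', hf, one_smul] at hq)
  · exact .inl (by rwa [hp', he, one_smul] at hp)

theorem exists_basis_of_span_image_eq (b : Basis ι R M) (s : Set ι) {N : Submodule R M}
    (h : span R (b '' s) = N) : ∃ bN : Basis s R N, ∀ i : s, (bN i : M) = b i := by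
  rw [Set.image_eq_range] at h
  exact ⟨(Basis.span (b.linearIndepOn s)).map (LinearEquiv.ofEq _ _ h), fun i => Basis.coe_span_apply (b.linearIndepOn s) i⟩

end Module.Basis

end

/-- Let `R` be a zero-sum-free commutative semiring with only trivial
idempotent pairs, and let `M` be a free `R`-module with basis `b : ι → M`.  Suppose
`M = P ⊕ Q`, i.e. every element of `M` is uniquely the sum of an element of `P` and an
element of `Q`.  Then there is a subset `s ⊆ ι` such that `P` is free with basis
`{b i : i ∈ s}` and `Q` is free with basis `{b i : i ∉ s}`. -/
theorem direct_summand_of_free {R M ι : Type*} [CommSemiring R]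
    [AddCommMonoid M] [Module R M]
    (hzsf : ∀ a b : R, a + b = 0 → a = 0 ∧ b = 0)
    (htriv : ∀ e f : R, e + f = 1 → e * f = 0 → (e = 0 ∧ f = 1) ∨ (e = 1 ∧ f = 0))
    (b : Module.Basis ι R M) (P Q : Submodule R M)
    (hdec : ∀ m : M, ∃! pq : P × Q, ((pq.1 : M) + (pq.2 : M) = m)) :
    ∃ s : Set ι, ∃ bP : Module.Basis s R P, ∃ bQ : Module.Basis ↥(sᶜ) R Q,
      (∀ i : s, (bP i : M) = b i) ∧ (∀ i : ↥(sᶜ), (bQ i : M) = b i) := by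
  have hinj : Function.Injective (P.subtype.coprod Q.subtype) :=
    fun x y hxy => (hdec _).unique hxy rfl
  have hsup : P ⊔ Q = ⊤ := eq_top_iff'.2 fun m => by
    obtain ⟨pq, hpq, -⟩ := hdec m
    exact hpq ▸ add_mem_sup pq.1.2 pq.2.2
  set s : Set ι := {i | b i ∈ P}
  have hsQ : ∀ i ∈ sᶜ, b i ∈ Q := fun i hi =>
    (b.mem_or_mem_of_injective_coprod hzsf htriv hinj (hsup ▸ mem_top)).resolve_left hi
  have hspan : span R (b '' s) ⊔ span R (b '' sᶜ) = ⊤ := by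
    rw [← span_union, ← Set.image_union, Set.union_compl_self, Set.image_univ, b.span_eq]
  obtain ⟨hP, hQ⟩ := eq_of_injective_coprod_of_sup_eq_top hinj
    (span_le.2 (Set.image_subset_iff.2 fun i hi => hi))
    (span_le.2 (Set.image_subset_iff.2 hsQ)) hspan
  obtain ⟨bP, hbP⟩ := b.exists_basis_of_span_image_eq s hP
  obtain ⟨bQ, hbQ⟩ := b.exists_basis_of_span_image_eq sᶜ hQ
  exact ⟨s, bP, bQ, hbP, hbQ⟩
end

section
/- Let K be an idempotent semifield and let G be a totally ordered abelian group structure underlying K^× (equivalently, K is a semifield with a + a = a). For any commutative monoid M, the unit group of the monoid semiring K[M] is isomorphic to K^× × M^×; explicitly, every unit of K[M] is a nonzero scalar multiple of a single invertible monomial. -/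
/-!
In an idempotent semiring `a + b = 0` forces `a = a + (a + b) = a + b = 0`, so terms of a sum
cannot cancel. Hence if `f * g = 1` in `K[M]`, every coefficient `f a * g b` contributes to the
coefficient of `a * b` in `1`, which gives `a * b = 1` for all `a` in the support of `f` and `b`
in that of `g`. Fixing `b`, the whole support of `f` is the inverse of `b`, so `f` is a monomial,
and comparing `single a r * single b s = 1` shows that `a` and `r` are units.
-/

theorem eq_zero_of_add_eq_zero_of_add_self {A : Type*} [AddMonoid A] (hidem : ∀ a : A, a + a = a)
    {a b : A} (h : a + b = 0) : a = 0 :=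
  calc a = a + (a + b) := by rw [h, add_zero]
    _ = a + b := by rw [← add_assoc, hidem]
    _ = 0 := h

theorem Finset.eq_zero_of_sum_eq_zero_of_add_eq_zero {ι A : Type*} [AddCommMonoid A]
    (hzsf : ∀ a b : A, a + b = 0 → a = 0) {s : Finset ι} {f : ι → A}
    (h : ∑ j ∈ s, f j = 0) {i : ι} (hi : i ∈ s) : f i = 0 := by
  classical
  exact hzsf _ _ <| (s.add_sum_erase f hi).trans h

namespace MonoidAlgebra

variable {K M : Type*} [Semiring K] [Monoid M]

theorem single_mul_single_eq_one_iff [Nontrivial K] {a b : M} {r s : K} :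
    single a r * single b s = 1 ↔ a * b = 1 ∧ r * s = 1 := by
  rw [single_mul_single, one_def, single_inj]
  simp

theorem coeff_mul_mul_ne_zero [NoZeroDivisors K] (hzsf : ∀ a b : K, a + b = 0 → a = 0)
    {f g : MonoidAlgebra K M} {a b : M} (ha : f.coeff a ≠ 0) (hb : g.coeff b ≠ 0) :
    (f * g).coeff (a * b) ≠ 0 := by
  classical
  intro h
  rw [coeff_mul, Finsupp.sum] at h
  have h₁ := Finset.eq_zero_of_sum_eq_zero_of_add_eq_zero hzsf h (Finsupp.mem_support_iff.2 ha)
  have h₂ := Finset.eq_zero_of_sum_eq_zero_of_add_eq_zero hzsf h₁ (Finsupp.mem_support_iff.2 hb)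
  exact mul_ne_zero ha hb (by simpa using h₂)

theorem mul_eq_one_of_coeff_ne_zero [NoZeroDivisors K] (hzsf : ∀ a b : K, a + b = 0 → a = 0)
    {f g : MonoidAlgebra K M} (hfg : f * g = 1) {a b : M} (ha : f.coeff a ≠ 0)
    (hb : g.coeff b ≠ 0) : a * b = 1 := by
  by_contra hab
  apply coeff_mul_mul_ne_zero hzsf ha hb
  rw [hfg, one_def, coeff_single, Finsupp.single_eq_of_ne hab]

theorem eq_single_of_mul_eq_one [NoZeroDivisors K] [Nontrivial K]
    (hzsf : ∀ a b : K, a + b = 0 → a = 0) {f g : MonoidAlgebra K M} (hfg : f * g = 1)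
    (hgf : g * f = 1) {a : M} (ha : f.coeff a ≠ 0) : f = single a (f.coeff a) := by
  obtain ⟨b, hb⟩ := Finsupp.support_nonempty_iff.2 <|
    coeff_eq_zero.not.2 (right_ne_zero_of_mul_eq_one hfg)
  refine coeff_injective <| Finsupp.support_subset_singleton.1 fun x hx => ?_
  rw [Finsupp.mem_support_iff] at hx hb
  exact Finset.mem_singleton.2 <| left_inv_eq_right_inv
    (mul_eq_one_of_coeff_ne_zero hzsf hfg hx hb) (mul_eq_one_of_coeff_ne_zero hzsf hgf hb ha)

theorem exists_units_eq_single [NoZeroDivisors K] [Nontrivial K]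
    (hzsf : ∀ a b : K, a + b = 0 → a = 0) (u : (MonoidAlgebra K M)ˣ) :
    ∃ (c : Kˣ) (m : Mˣ), u.val = single (m : M) (c : K) := by
  obtain ⟨a, ha⟩ := Finsupp.support_nonempty_iff.2 <| coeff_eq_zero.not.2 u.ne_zero
  obtain ⟨b, hb⟩ := Finsupp.support_nonempty_iff.2 <| coeff_eq_zero.not.2 u⁻¹.ne_zero
  have hu := eq_single_of_mul_eq_one hzsf u.mul_inv u.inv_mul (Finsupp.mem_support_iff.1 ha)
  have hu' := eq_single_of_mul_eq_one hzsf u.inv_mul u.mul_inv (Finsupp.mem_support_iff.1 hb)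
  have h₁ := u.mul_inv
  have h₂ := u.inv_mul
  rw [hu, hu', single_mul_single_eq_one_iff] at h₁
  rw [hu, hu', single_mul_single_eq_one_iff] at h₂
  exact ⟨⟨_, _, h₁.2, h₂.2⟩, ⟨a, b, h₁.1, h₂.1⟩, hu⟩

noncomputable def unitsSingleHom : Kˣ × Mˣ →* (MonoidAlgebra K M)ˣ :=
  (Units.map singleHom).comp MulEquiv.prodUnits.symm.toMonoidHom

theorem unitsSingleHom_injective [Nontrivial K] :
    Function.Injective (unitsSingleHom : Kˣ × Mˣ →* (MonoidAlgebra K M)ˣ) := by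
  intro p q h
  rcases single_inj.1 (congrArg Units.val h) with ⟨hm, hc⟩ | ⟨hc, -⟩
  · exact Prod.ext (Units.ext hc) (Units.ext hm)
  · exact absurd hc p.1.ne_zero

theorem unitsSingleHom_surjective [NoZeroDivisors K] [Nontrivial K]
    (hzsf : ∀ a b : K, a + b = 0 → a = 0) :
    Function.Surjective (unitsSingleHom : Kˣ × Mˣ →* (MonoidAlgebra K M)ˣ) := fun u =>
  let ⟨c, m, hu⟩ := exists_units_eq_single hzsf u
  ⟨(c, m), Units.ext hu.symm⟩

end MonoidAlgebra

/-- Let `K` be an idempotent semifield and `M` a commutative monoid.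
Then the unit group of the monoid semiring `K[M]` is isomorphic to `K^× × M^×`;
explicitly, every unit of `K[M]` is a nonzero scalar multiple of a single invertible
monomial. -/
theorem units_monoidAlgebra_idem_semifield {K M : Type*} [Semifield K] [CommMonoid M]
    (hidem : ∀ a : K, a + a = a) :
    (∀ u : (MonoidAlgebra K M)ˣ, ∃ (c : Kˣ) (m : Mˣ),
      u.val = MonoidAlgebra.single (m : M) (c : K)) ∧
    Nonempty (Kˣ × Mˣ ≃* (MonoidAlgebra K M)ˣ) := by
  have hzsf : ∀ a b : K, a + b = 0 → a = 0 := fun _ _ => eq_zero_of_add_eq_zero_of_add_self hidem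
  exact ⟨MonoidAlgebra.exists_units_eq_single hzsf,
    ⟨MulEquiv.ofBijective MonoidAlgebra.unitsSingleHom
      ⟨MonoidAlgebra.unitsSingleHom_injective, MonoidAlgebra.unitsSingleHom_surjective hzsf⟩⟩⟩
end

section
/- Let X be a topological space in which every irreducible closed subset has a unique generic point (sober), with an open cover {U_i} by nonempty irreducible open sets. Form a graph with vertex set the index set, and an edge between i and j whenever U_i ∩ U_j ≠ ∅. Then X is irreducible if and only if this graph is connected. -/
/-- Let `X` be a sober topological space with an open cover `{U i}` by
nonempty irreducible open sets.  Form the graph on the index set with an edge between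
`i` and `j` whenever `U i ∩ U j ≠ ∅`.  Then `X` is irreducible if and only if this graph
is connected. -/
theorem irreducible_iff_cover_graph_connected {X ι : Type*} [TopologicalSpace X]
    [QuasiSober X] [T0Space X]
    (U : ι → Set X) (hopen : ∀ i, IsOpen (U i)) (hirr : ∀ i, IsIrreducible (U i))
    (hcover : ⋃ i, U i = Set.univ) :
    IrreducibleSpace X ↔
      (SimpleGraph.fromRel (fun i j => (U i ∩ U j).Nonempty)).Connected := by
  set G := SimpleGraph.fromRel (fun i j => (U i ∩ U j).Nonempty) with hG
  constructor
  · intro hX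
    have hne : Nonempty X := hX.toNonempty
    obtain ⟨x⟩ := hne
    have hx : x ∈ ⋃ i, U i := hcover ▸ Set.mem_univ x
    obtain ⟨i0, hi0⟩ := Set.mem_iUnion.mp hx
    haveI : Nonempty ι := ⟨i0⟩
    refine SimpleGraph.Connected.mk ?_
    intro i j
    by_cases hij : i = j
    · subst hij; rfl
    · have h : (U i ∩ U j).Nonempty := by
        have := (IrreducibleSpace.isIrreducible_univ X).2 (U i) (U j) (hopen i) (hopen j)
          (by simpa using (hirr i).1) (by simpa using (hirr j).1)
        simpa using this
      exact SimpleGraph.Adj.reachable <| (SimpleGraph.fromRel_adj ..).mpr ⟨hij, Or.inl h⟩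
  · intro hconn
    obtain ⟨i0⟩ := hconn.nonempty
    have hXne : Nonempty X := ⟨(hirr i0).1.some⟩
    -- key: intersections with a nonempty open propagate along walks
    have key : ∀ (u : Set X), IsOpen u → ∀ {i j : ι} (_ : G.Walk i j),
        (u ∩ U i).Nonempty → (u ∩ U j).Nonempty := by
      intro u hu i j p
      induction p with
      | nil => exact id
      | @cons a b c hab _ ih =>
        intro hua
        apply ih
        have hUab : (U a ∩ U b).Nonempty := by
          rw [hG, SimpleGraph.fromRel_adj] at hab
          rcases hab.2 with h | h
          · exact h
          · exact ⟨h.some, h.some_mem.2, h.some_mem.1⟩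
        have := (hirr a).2 u (U b) hu (hopen b)
          ⟨hua.some, hua.some_mem.2, hua.some_mem.1⟩ hUab
        exact ⟨this.some, this.some_mem.2.1, this.some_mem.2.2⟩
    haveI : PreirreducibleSpace X := by
      constructor
      intro u v hu hv hune hvne
      rw [Set.univ_inter] at hune hvne ⊢
      obtain ⟨x, hx⟩ := hune
      obtain ⟨y, hy⟩ := hvne
      obtain ⟨i, hxi⟩ := Set.mem_iUnion.mp (hcover ▸ Set.mem_univ x)
      obtain ⟨j, hyj⟩ := Set.mem_iUnion.mp (hcover ▸ Set.mem_univ y)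
      obtain ⟨p⟩ := hconn.preconnected i j
      have huj : (u ∩ U j).Nonempty := key u hu p ⟨x, hx, hxi⟩
      have := (hirr j).2 u v hu hv
        ⟨huj.some, huj.some_mem.2, huj.some_mem.1⟩ ⟨y, hyj, hy⟩
      exact ⟨this.some, this.some_mem.2⟩
    exact ⟨hXne⟩
end
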